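/- arXiv:2008.00850 — 5 statements merged into one kernel-verified Lean document; each statement's English description precedes it below -/
import Mathlib

section
/- Let p be a prime and let X and Y be n×n matrices over ℚ_p. If ‖Y − X‖_p < |det(X)|_p / h_p(X)^n, then |det(Y)|_p = |det(X)|_p. -/
open Matrix

/-- The `p`-adic sup-norm of a matrix over `ℚ_[p]`: the maximum of the `p`-adic
absolute values of its entries. -/
noncomputable def pMatNorm {n p : ℕ} [Fact p.Prime]
    (A : Matrix (Fin n) (Fin n) ℚ_[p]) : ℝ :=
  ((Finset.univ.sup fun ij : Fin n × Fin n => ‖A ij.1 ij.2‖₊ : NNReal) : ℝ)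

/-- The `p`-adic inhomogeneous height `h_p(A) = max {‖A‖_p, 1}`. -/
noncomputable def pMatHeight {n p : ℕ} [Fact p.Prime]
    (A : Matrix (Fin n) (Fin n) ℚ_[p]) : ℝ :=
  max (pMatNorm A) 1

/-!
Expanding both determinants by the Leibniz formula, each term of `det Y - det X` is a difference
of two products of `n` entries bounded by `h_p(X)` (entries of `Y` stay below `h_p(X)` since
`‖Y - X‖_p < 1`) which differ entrywise by at most `‖Y - X‖_p`; ultrametrically such a difference
has norm at most `‖Y - X‖_p h_p(X)^n < |det X|_p`. An ultrametric perturbation smaller than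
`|det X|_p` does not change it.
-/

open Finset in
theorem norm_prod_le_pow_card {ι R : Type*} [NormedCommRing R] [NormOneClass R]
    (s : Finset ι) (f : ι → R) {M : ℝ} (hf : ∀ i ∈ s, ‖f i‖ ≤ M) :
    ‖∏ i ∈ s, f i‖ ≤ M ^ #s :=
  calc ‖∏ i ∈ s, f i‖ ≤ ∏ i ∈ s, ‖f i‖ := s.norm_prod_le f
    _ ≤ ∏ _i ∈ s, M := prod_le_prod (fun _ _ => norm_nonneg _) hf
    _ = M ^ #s := prod_const M

namespace IsUltrametricDist

variable {R : Type*} [NormedCommRing R] [NormOneClass R] [IsUltrametricDist R]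

open Finset in
theorem norm_prod_sub_prod_le {ι : Type*} [DecidableEq ι] (s : Finset ι) {f g : ι → R}
    {M ε : ℝ} (hM : 1 ≤ M) (hε : 0 ≤ ε) (hf : ∀ i ∈ s, ‖f i‖ ≤ M) (hg : ∀ i ∈ s, ‖g i‖ ≤ M)
    (hfg : ∀ i ∈ s, ‖f i - g i‖ ≤ ε) :
    ‖∏ i ∈ s, f i - ∏ i ∈ s, g i‖ ≤ ε * M ^ #s := by
  induction s using Finset.induction_on with
  | empty => simpa using hε
  | @insert a s ha ih =>
    simp only [forall_mem_insert] at hf hg hfg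
    have telescope : ∏ i ∈ insert a s, f i - ∏ i ∈ insert a s, g i
        = f a * (∏ i ∈ s, f i - ∏ i ∈ s, g i) + (f a - g a) * ∏ i ∈ s, g i := by
      rw [prod_insert ha, prod_insert ha]; ring
    rw [telescope, card_insert_of_notMem ha, pow_succ']
    refine (norm_add_le_max _ _).trans (max_le ?_ ?_) <;> refine (norm_mul_le _ _).trans ?_
    · calc ‖f a‖ * ‖∏ i ∈ s, f i - ∏ i ∈ s, g i‖ ≤ M * (ε * M ^ #s) :=
            mul_le_mul hf.1 (ih hf.2 hg.2 hfg.2) (norm_nonneg _) (zero_le_one.trans hM)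
        _ = ε * (M * M ^ #s) := by ring
    · calc ‖f a - g a‖ * ‖∏ i ∈ s, g i‖ ≤ ε * M ^ #s :=
            mul_le_mul hfg.1 (norm_prod_le_pow_card s g hg.2) (norm_nonneg _) hε
        _ ≤ ε * (M * M ^ #s) :=
            mul_le_mul_of_nonneg_left (le_mul_of_one_le_left (by positivity) hM) hε

variable {n : Type*} [Fintype n] [DecidableEq n]

theorem norm_det_le_pow_card {A : Matrix n n R} {M : ℝ} (hM : 0 ≤ M)
    (hA : ∀ i j, ‖A i j‖ ≤ M) : ‖A.det‖ ≤ M ^ Fintype.card n := by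
  rw [det_apply']
  refine norm_sum_le_of_forall_le_of_nonneg (by positivity) fun σ _ => ?_
  calc ‖(Equiv.Perm.sign σ : R) * ∏ i, A (σ i) i‖
      ≤ ‖(Equiv.Perm.sign σ : R)‖ * ‖∏ i, A (σ i) i‖ := norm_mul_le _ _
    _ ≤ 1 * M ^ Fintype.card n :=
        mul_le_mul (norm_intCast_le_one R _) (norm_prod_le_pow_card _ _ fun i _ => hA _ _)
          (norm_nonneg _) zero_le_one
    _ = M ^ Fintype.card n := one_mul _

theorem norm_det_sub_det_le {A B : Matrix n n R} {M ε : ℝ} (hM : 1 ≤ M) (hε : 0 ≤ ε)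
    (hA : ∀ i j, ‖A i j‖ ≤ M) (hB : ∀ i j, ‖B i j‖ ≤ M) (hAB : ∀ i j, ‖A i j - B i j‖ ≤ ε) :
    ‖A.det - B.det‖ ≤ ε * M ^ Fintype.card n := by
  rw [det_apply', det_apply', ← Finset.sum_sub_distrib]
  refine norm_sum_le_of_forall_le_of_nonneg (by positivity) fun σ _ => ?_
  calc ‖(Equiv.Perm.sign σ : R) * ∏ i, A (σ i) i - (Equiv.Perm.sign σ : R) * ∏ i, B (σ i) i‖
      ≤ ‖(Equiv.Perm.sign σ : R)‖ * ‖∏ i, A (σ i) i - ∏ i, B (σ i) i‖ := by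
        rw [← mul_sub]; exact norm_mul_le _ _
    _ ≤ 1 * (ε * M ^ Fintype.card n) :=
        mul_le_mul (norm_intCast_le_one R _)
          (norm_prod_sub_prod_le _ hM hε (fun i _ => hA _ _) (fun i _ => hB _ _)
            fun i _ => hAB _ _)
          (norm_nonneg _) zero_le_one
    _ = ε * M ^ Fintype.card n := one_mul _

theorem norm_det_eq_of_norm_sub_le {A B : Matrix n n R} {M ε : ℝ} (hM : 1 ≤ M) (hε : 0 ≤ ε)
    (hB : ∀ i j, ‖B i j‖ ≤ M) (hAB : ∀ i j, ‖A i j - B i j‖ ≤ ε)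
    (hsmall : ε * M ^ Fintype.card n < ‖B.det‖) : ‖A.det‖ = ‖B.det‖ := by
  have hε1 : ε < 1 := by
    have hpow : 0 < M ^ Fintype.card n := by positivity
    by_contra! h1
    have := norm_det_le_pow_card (zero_le_one.trans hM) hB
    nlinarith
  have hA : ∀ i j, ‖A i j‖ ≤ M := fun i j =>
    calc ‖A i j‖ = ‖(A i j - B i j) + B i j‖ := by rw [sub_add_cancel]
      _ ≤ max ‖A i j - B i j‖ ‖B i j‖ := norm_add_le_max _ _
      _ ≤ M := max_le ((hAB i j).trans (hε1.le.trans hM)) (hB i j)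
  have hdiff : ‖A.det - B.det‖ < ‖B.det‖ :=
    (norm_det_sub_det_le hM hε hA hB hAB).trans_lt hsmall
  rw [← sub_add_cancel A.det B.det, norm_add_eq_max_of_norm_ne_norm hdiff.ne,
    max_eq_right hdiff.le]

end IsUltrametricDist

theorem norm_apply_le_pMatNorm {n p : ℕ} [Fact p.Prime] (A : Matrix (Fin n) (Fin n) ℚ_[p])
    (i j : Fin n) : ‖A i j‖ ≤ pMatNorm A := by
  unfold pMatNorm
  exact_mod_cast Finset.le_sup (f := fun ij : Fin n × Fin n => ‖A ij.1 ij.2‖₊)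
    (Finset.mem_univ (i, j))

theorem det_abs_eq_of_close {n p : ℕ} [Fact p.Prime]
    (X Y : Matrix (Fin n) (Fin n) ℚ_[p])
    (h : pMatNorm (Y - X) < ‖X.det‖ / pMatHeight X ^ n) :
    ‖Y.det‖ = ‖X.det‖ := by
  have hM : 1 ≤ pMatHeight X := le_max_right _ _
  have hsmall : pMatNorm (Y - X) * pMatHeight X ^ Fintype.card (Fin n) < ‖X.det‖ := by
    rwa [Fintype.card_fin, ← lt_div_iff₀ (by positivity)]
  exact IsUltrametricDist.norm_det_eq_of_norm_sub_le hM NNReal.zero_le_coe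
    (fun i j => (norm_apply_le_pMatNorm X i j).trans (le_max_left _ _))
    (fun i j => norm_apply_le_pMatNorm (Y - X) i j) hsmall
end

section
/- Let p be a prime and let A be an invertible n×n matrix over ℚ_p. Then there exists at least one matrix E ∈ ℰ_n (an n×n diagonal matrix with each diagonal entry equal to 1 or −1) such that |det(A − E)|_p ≥ |2^n · det(A)|_p. -/
open Matrix

/-- An `n × n` matrix is a *sign diagonal* matrix (an element of `ℰ_n`) if it is
diagonal with every diagonal entry equal to `1` or `-1`. -/
def IsSignDiag {n : ℕ} {R : Type*} [Ring R] (E : Matrix (Fin n) (Fin n) R) : Prop :=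
  ∃ s : Fin n → R, (∀ i, s i = 1 ∨ s i = -1) ∧ E = Matrix.diagonal s

/-! Summing over all `2ⁿ` sign choices, each row of `A - E` is `Aᵢ - eᵢ` once and `Aᵢ + eᵢ` once,
so multilinearity of the determinant in the rows gives `∑_{E ∈ ℰₙ} det (A - E) = 2ⁿ det A`.
By the ultrametric inequality some summand is at least as large as the sum in `p`-adic norm. -/
theorem MultilinearMap.sum_map_sub_ite_neg {R ι M N : Type*} [CommSemiring R] [AddCommGroup M]
    [Module R M] [AddCommMonoid N] [Module R N] [Fintype ι] [DecidableEq ι]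
    (f : MultilinearMap R (fun _ : ι => M) N) (v w : ι → M) :
    ∑ σ : ι → Bool, f (fun i => v i - if σ i then w i else -w i) =
      2 ^ Fintype.card ι • f v := by
  have hpair : ∀ i, ∑ b : Bool, (v i - if b then w i else -w i) = (2 : R) • v i := fun i => by
    simp only [Fintype.sum_bool, ite_true, Bool.false_eq_true, ite_false, two_smul]; abel
  calc ∑ σ : ι → Bool, f (fun i => v i - if σ i then w i else -w i)
      = f (fun i => ∑ b : Bool, (v i - if b then w i else -w i)) :=
        (f.map_sum fun i (b : Bool) => v i - if b then w i else -w i).symm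
    _ = 2 ^ Fintype.card ι • f v := by
      rw [funext hpair, f.map_smul_univ, Finset.prod_const, Finset.card_univ,
        ← Nat.cast_ofNat, ← Nat.cast_pow, Nat.cast_smul_eq_nsmul]

theorem Matrix.sum_det_sub_diagonal_signs {R ι : Type*} [CommRing R] [Fintype ι] [DecidableEq ι]
    (A : Matrix ι ι R) :
    ∑ σ : ι → Bool, (A - diagonal fun i => if σ i then 1 else -1).det =
      2 ^ Fintype.card ι * A.det := by
  have hrows : ∀ σ : ι → Bool, (A - diagonal fun i => if σ i then 1 else -1 : Matrix ι ι R) =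
      fun i => A i - if σ i then Pi.single i 1 else -Pi.single i 1 := fun σ => by
    ext i j
    by_cases hij : i = j
    · subst hij; cases h : σ i <;> simp [h]
    · cases σ i <;> simp [diagonal_apply_ne _ hij, Pi.single_eq_of_ne' hij]
  simp only [hrows]
  have h := (detRowAlternating (n := ι) (R := R)).toMultilinearMap.sum_map_sub_ite_neg A
    fun i => Pi.single i 1
  rw [nsmul_eq_mul, Nat.cast_pow, Nat.cast_ofNat] at h
  exact h

theorem exists_sign_diag_det_sub_ge_general {n p : ℕ} [Fact p.Prime]
    (A : Matrix (Fin n) (Fin n) ℚ_[p]) :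
    ∃ E : Matrix (Fin n) (Fin n) ℚ_[p], IsSignDiag E ∧
      ‖(2 ^ n * A.det : ℚ_[p])‖ ≤ ‖(A - E).det‖ := by
  obtain ⟨σ, -, hσ⟩ := IsUltrametricDist.exists_norm_finsetSum_le_of_nonempty
    Finset.univ_nonempty fun σ : Fin n → Bool => (A - diagonal fun i => if σ i then 1 else -1).det
  refine ⟨diagonal fun i => if σ i then 1 else -1, ⟨_, fun i => ?_, rfl⟩, ?_⟩
  · cases σ i <;> simp
  · simpa only [sum_det_sub_diagonal_signs, Fintype.card_fin] using hσ

theorem exists_sign_diag_det_sub_ge {n p : ℕ} [Fact p.Prime]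
    (A : Matrix (Fin n) (Fin n) ℚ_[p]) (hA : IsUnit A.det) :
    ∃ E : Matrix (Fin n) (Fin n) ℚ_[p], IsSignDiag E ∧
      ‖(2 ^ n * A.det : ℚ_[p])‖ ≤ ‖(A - E).det‖ :=
  exists_sign_diag_det_sub_ge_general A
end

section
/- Let R be a commutative ring, let A be an n×n matrix over R, and let D be an n×n diagonal matrix over R. Then the sum over all Λ ∈ ℰ_n of det(A − Λ·D) equals 2^n · det(A). In particular, ∑_{E ∈ ℰ_n} det(A − E) = 2^n · det(A). -/
open Matrix

/-!
Row `i` of `A - diagonal (s * c)` is `A i - s i • c i • eᵢ`. The determinant is multilinear in the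
rows and the signs `s i` range independently over `{1, -1}`, so the sum over all `s` is the
determinant of the matrix whose `i`-th row is `(A i - c i • eᵢ) + (A i + c i • eᵢ) = 2 • A i`.
-/

theorem MultilinearMap.sum_map_sub_units_smul {R ι N : Type*} {M : ι → Type*} [CommRing R]
    [Fintype ι] [DecidableEq ι] [∀ i, AddCommGroup (M i)] [∀ i, Module R (M i)]
    [AddCommMonoid N] [Module R N] (f : MultilinearMap R M N) (v w : ∀ i, M i) :
    ∑ s : ι → ℤˣ, f (fun i => v i - (s i : ℤ) • w i) = (2 : R) ^ Fintype.card ι • f v := by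
  have sum_signs (i : ι) : ∑ e : ℤˣ, (v i - (e : ℤ) • w i) = (2 : R) • v i := by
    rw [show (Finset.univ : Finset ℤˣ) = {1, -1} from rfl, Finset.sum_pair (by decide), two_smul]
    simp only [Units.val_one, Units.val_neg, one_smul, neg_smul, sub_neg_eq_add]
    abel
  rw [← f.map_sum (fun i (e : ℤˣ) => v i - (e : ℤ) • w i), funext sum_signs,
    f.map_smul_univ, Finset.prod_const, Finset.card_univ]

theorem Matrix.sum_det_sub_units_diagonal {ι R : Type*} [Fintype ι] [DecidableEq ι] [CommRing R]
    (A : Matrix ι ι R) (c : ι → R) :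
    ∑ s : ι → ℤˣ, (A - diagonal (fun i => ((s i : ℤ) : R) * c i)).det
      = 2 ^ Fintype.card ι * A.det := by
  have rows (s : ι → ℤˣ) : A - diagonal (fun i => ((s i : ℤ) : R) * c i)
      = fun i => A i - (s i : ℤ) • Pi.single i (c i) := by
    ext i j
    simp [Pi.single_apply, diagonal_apply, eq_comm, zsmul_eq_mul]
  simp only [rows]
  exact detRowAlternating.toMultilinearMap.sum_map_sub_units_smul A (fun i => Pi.single i (c i))

theorem sum_det_sub_sign_diag {n : ℕ} {R : Type*} [CommRing R]
    (A D : Matrix (Fin n) (Fin n) R) (hD : D.IsDiag) :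
    (∑ s : Fin n → ℤˣ,
        (A - Matrix.diagonal (fun i => ((s i : ℤ) : R)) * D).det = 2 ^ n * A.det) ∧
    (∑ s : Fin n → ℤˣ,
        (A - Matrix.diagonal (fun i => ((s i : ℤ) : R))).det = 2 ^ n * A.det) := by
  constructor
  · rw [← hD.diagonal_diag]
    simp only [diagonal_mul_diagonal]
    simpa using A.sum_det_sub_units_diagonal D.diag
  · simpa using A.sum_det_sub_units_diagonal 1
end

section
/- Let K be a field, let F, U, U_p, τ be n×n matrices over K with det(U + F) ≠ 0 and det(U_p + F) ≠ 0, and set τ̂ := (U + F)⁻¹(U − F)·τ and τ_p := (U_p + F)⁻¹(U_p − F)·τ. Then τ̂ − τ_p = (U + F)⁻¹ · (U − U_p) · (τ − τ_p). -/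
/-!
The only thing used about `τ_p` is that it solves `(U_p + F) τ_p = (U_p - F) τ`. After pulling
out `(U + F)⁻¹`, the claim becomes the noncommutative ring identity
`(U - F) τ - (U + F) τ_p = (U - U_p)(τ - τ_p) + ((U_p - F) τ - (U_p + F) τ_p)`,
and the last summand is zero.
-/

open Matrix

theorem cayley_residual_eq_of_mul_eq {R : Type*} [Ring R] {F U V τ σ : R}
    (h : (V + F) * σ = (V - F) * τ) :
    (U - F) * τ - (U + F) * σ = (U - V) * (τ - σ) :=
  calc (U - F) * τ - (U + F) * σ = (U - V) * (τ - σ) + ((V - F) * τ - (V + F) * σ) := by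
        noncomm_ring
    _ = (U - V) * (τ - σ) := by rw [h, sub_self, add_zero]

theorem Matrix.nonsing_inv_mul_sub {m R : Type*} [Fintype m] [DecidableEq m] [CommRing R]
    {A : Matrix m m R} (hA : IsUnit A.det) (X Y : Matrix m m R) :
    A⁻¹ * X - Y = A⁻¹ * (X - A * Y) := by
  rw [Matrix.mul_sub, Matrix.nonsing_inv_mul_cancel_left _ _ hA]

theorem cayley_difference_identity {n : ℕ} {K : Type*} [Field K]
    (F U Up τ : Matrix (Fin n) (Fin n) K)
    (h1 : (U + F).det ≠ 0) (h2 : (Up + F).det ≠ 0) :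
    let τhat := (U + F)⁻¹ * (U - F) * τ
    let τp := (Up + F)⁻¹ * (Up - F) * τ
    τhat - τp = (U + F)⁻¹ * (U - Up) * (τ - τp) := by
  intro τhat τp
  have hτp : (Up + F) * τp = (Up - F) * τ := by
    change (Up + F) * ((Up + F)⁻¹ * (Up - F) * τ) = _
    rw [Matrix.mul_assoc, Matrix.mul_nonsing_inv_cancel_left _ _ h2.isUnit]
  calc τhat - τp = (U + F)⁻¹ * ((U - F) * τ - (U + F) * τp) := by
        change (U + F)⁻¹ * (U - F) * τ - τp = _
        rw [Matrix.mul_assoc, Matrix.nonsing_inv_mul_sub h1.isUnit]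
    _ = (U + F)⁻¹ * (U - Up) * (τ - τp) := by
        rw [cayley_residual_eq_of_mul_eq hτp, Matrix.mul_assoc]
end

section
/- Let P be a finite set of primes, let d be a positive integer, and let ε be a real number with 0 < ε ≤ 1. Suppose that for every p ∈ P an n×n skew-symmetric matrix U_p over ℚ_p is given such that every entry of d·U_p lies in ℤ_p. Then there exists an n×n skew-symmetric matrix U over ℚ such that d·U has integer entries, every entry of U has (archimedean) absolute value at most C/d where C = ∏_{p ∈ P} p^{⌈log_p(d/ε)⌉ + 1}, and ‖U − U_p‖_p < ε for every p ∈ P. -/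
open Matrix

instance (p : Nat.Primes) : Fact (Nat.Prime (p : ℕ)) := ⟨p.2⟩

/-! For each `p ∈ P` the exponent `k_p = ⌈log_p (d / ε)⌉ + 1` satisfies `d * p ^ (-k_p) < ε`.
For each entry, the Chinese remainder theorem glues the truncations `appr` of the `p`-adic
integers `d * U_p i j` into one natural number `m < ∏ p ^ k_p` that is `p ^ (-k_p)`-close to all
of them; since `|d|_p ≥ 1 / d`, the rational `m / d` is then `ε`-close to every `U_p i j`.
Doing this above the diagonal and filling the rest by skew-symmetry keeps all bounds, because
each `U_p` is itself skew-symmetric. -/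

namespace Matrix

variable {ι α : Type*} [LinearOrder ι]

def skewOfUpper [Zero α] [Neg α] (A : Matrix ι ι α) : Matrix ι ι α :=
  of fun i j => if i < j then A i j else if j < i then -A j i else 0

lemma skewOfUpper_apply_mem [Zero α] [Neg α] {S : Set α} (h0 : 0 ∈ S)
    (hneg : ∀ x ∈ S, -x ∈ S) {A : Matrix ι ι α} (hA : ∀ i j, A i j ∈ S) (i j : ι) :
    skewOfUpper A i j ∈ S := by
  simp only [skewOfUpper, of_apply]
  split_ifs
  exacts [hA i j, hneg _ (hA j i), h0]

lemma transpose_skewOfUpper [AddGroup α] (A : Matrix ι ι α) :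
    (skewOfUpper A)ᵀ = -skewOfUpper A := by
  ext i j
  rcases lt_trichotomy i j with h | rfl | h
  · simp [skewOfUpper, h, not_lt_of_gt h]
  · simp [skewOfUpper]
  · simp [skewOfUpper, h, not_lt_of_gt h]

lemma skewOfUpper_map [Zero α] [Neg α] {β : Type*} [Zero β] [Neg β] (A : Matrix ι ι α)
    {f : α → β} (hf₀ : f 0 = 0) (hf : ∀ x, f (-x) = -f x) :
    (skewOfUpper A).map f = skewOfUpper (A.map f) := by
  ext i j
  simp only [skewOfUpper, map_apply, of_apply]
  split_ifs <;> simp [hf₀, hf]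

lemma skewOfUpper_sub [AddCommGroup α] (A B : Matrix ι ι α) :
    skewOfUpper (A - B) = skewOfUpper A - skewOfUpper B := by
  ext i j
  simp only [skewOfUpper, sub_apply, of_apply]
  split_ifs <;> abel

lemma skewOfUpper_eq_self [AddGroup α] [IsAddTorsionFree α] {B : Matrix ι ι α}
    (hB : Bᵀ = -B) : skewOfUpper B = B := by
  have hB' : ∀ i j, B j i = -B i j := fun i j => congrFun (congrFun hB i) j
  ext i j
  rcases lt_trichotomy i j with h | rfl | h
  · simp [skewOfUpper, h]
  · simpa [skewOfUpper] using (self_eq_neg.mp (hB' i i)).symm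
  · simp [skewOfUpper, h, not_lt_of_gt h, hB' j i]

end Matrix

lemma pMatNorm_lt_iff {n p : ℕ} [Fact p.Prime] {A : Matrix (Fin n) (Fin n) ℚ_[p]} {ε : ℝ}
    (hε : 0 < ε) : pMatNorm A < ε ↔ ∀ i j, ‖A i j‖ < ε := by
  lift ε to NNReal using hε.le
  rw [pMatNorm, NNReal.coe_lt_coe, Finset.sup_lt_iff (by exact_mod_cast hε)]
  simp [← NNReal.coe_lt_coe]

lemma pMatNorm_map_skewOfUpper_sub_lt {n p : ℕ} [Fact p.Prime] {A : Matrix (Fin n) (Fin n) ℚ}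
    {B : Matrix (Fin n) (Fin n) ℚ_[p]} {ε : ℝ} (hB : Bᵀ = -B) (hε : 0 < ε)
    (hAB : ∀ i j, ‖(A i j : ℚ_[p]) - B i j‖ < ε) :
    pMatNorm ((skewOfUpper A).map (fun x : ℚ => (x : ℚ_[p])) - B) < ε := by
  rw [skewOfUpper_map _ Rat.cast_zero Rat.cast_neg, ← skewOfUpper_eq_self hB,
    ← skewOfUpper_sub, pMatNorm_lt_iff hε]
  exact skewOfUpper_apply_mem (S := {x | ‖x‖ < ε}) (by simpa)
    (fun x hx => by simpa using hx) (fun i j => hAB i j)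

lemma Real.lt_zpow_ceil_logb_add_one {b x : ℝ} (hb : 1 < b) (hx : 0 < x) :
    x < b ^ (⌈Real.logb b x⌉ + 1) := by
  rw [← Real.rpow_intCast, ← Real.logb_lt_iff_lt_rpow hb hx]
  push_cast
  linarith [Int.le_ceil (Real.logb b x)]

lemma Real.mul_zpow_neg_ceil_logb_div_add_one_lt {b x ε : ℝ} (hb : 1 < b) (hx : 0 < x)
    (hε : 0 < ε) : x * b ^ (-(⌈Real.logb b (x / ε)⌉ + 1)) < ε := by
  have := Real.lt_zpow_ceil_logb_add_one hb (div_pos hx hε)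
  rw [_root_.zpow_neg, ← div_eq_mul_inv, div_lt_iff₀ (zpow_pos (zero_lt_one.trans hb) _)]
  rwa [div_lt_iff₀ hε, mul_comm] at this

namespace Padic

variable {p : ℕ} [Fact p.Prime]

lemma inv_norm_natCast_le {d : ℕ} (hd : d ≠ 0) : ‖(d : ℚ_[p])‖⁻¹ ≤ d := by
  rw [norm_eq_zpow_neg_valuation (by exact_mod_cast hd), valuation_natCast, _root_.zpow_neg,
    inv_inv, zpow_natCast]
  exact_mod_cast Nat.le_of_dvd (Nat.pos_of_ne_zero hd) pow_padicValNat_dvd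

lemma norm_div_natCast_sub_lt {d : ℕ} (hd : d ≠ 0) {x y : ℚ_[p]} {δ ε : ℝ}
    (hxy : ‖x - d * y‖ ≤ δ) (hδ : d * δ < ε) : ‖x / d - y‖ < ε := by
  calc ‖x / d - y‖ = ‖x - d * y‖ * ‖(d : ℚ_[p])‖⁻¹ := by
        rw [← norm_inv, ← norm_mul, sub_mul, mul_right_comm, mul_inv_cancel₀ (by exact_mod_cast hd),
          one_mul, div_eq_mul_inv]
    _ ≤ δ * d :=
        mul_le_mul hxy (inv_norm_natCast_le hd) (by positivity) ((norm_nonneg _).trans hxy)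
    _ < ε := by linarith

end Padic

namespace PadicInt

variable {p : ℕ} [Fact p.Prime]

lemma norm_sub_appr_le (x : ℤ_[p]) (k : ℕ) : ‖x - x.appr k‖ ≤ (p : ℝ) ^ (-k : ℤ) :=
  (norm_le_pow_iff_mem_span_pow _ k).mpr (appr_spec k x)

lemma norm_natCast_sub_le_of_modEq {k a b : ℕ} (h : a ≡ b [MOD p ^ k]) :
    ‖(a : ℤ_[p]) - b‖ ≤ (p : ℝ) ^ (-k : ℤ) := by
  have hdvd : ((p ^ k : ℕ) : ℤ) ∣ (a : ℤ) - b := Nat.modEq_iff_dvd.mp h.symm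
  push_cast at hdvd
  simpa using norm_int_le_pow_iff_dvd.mpr hdvd

lemma exists_nat_lt_prod_forall_norm_sub_le (P : Finset Nat.Primes) (k : Nat.Primes → ℕ)
    (x : (p : Nat.Primes) → p ∈ P → ℤ_[p]) :
    ∃ m < ∏ p ∈ P, (p : ℕ) ^ k p,
      ∀ p (hp : p ∈ P), ‖(m : ℤ_[p]) - x p hp‖ ≤ ((p : ℕ) : ℝ) ^ (-k p : ℤ) := by
  classical
  set N := ∏ p ∈ P, (p : ℕ) ^ k p
  let r : Nat.Primes → ℕ := fun p => if hp : p ∈ P then (x p hp).appr (k p) else 0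
  have hcop : (P : Set Nat.Primes).Pairwise (Function.onFun Nat.Coprime fun p => (p : ℕ) ^ k p) :=
    fun p _ q _ hpq =>
      ((Nat.coprime_primes p.2 q.2).mpr (Subtype.coe_injective.ne hpq)).pow _ _
  obtain ⟨m, hm⟩ := Nat.chineseRemainderOfFinset r _ P (fun p _ => pow_ne_zero _ p.2.ne_zero) hcop
  refine ⟨m % N, Nat.mod_lt _ (Finset.prod_pos fun p _ => pow_pos p.2.pos _), fun p hp => ?_⟩
  have hmod : m % N ≡ r p [MOD (p : ℕ) ^ k p] :=
    ((Nat.mod_modEq _ _).of_dvd (Finset.dvd_prod_of_mem _ hp)).trans (hm p hp)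
  have hr : (r p : ℤ_[p]) = (x p hp).appr (k p) := by simp [r, hp]
  calc ‖((m % N : ℕ) : ℤ_[p]) - x p hp‖ = ‖((m % N : ℕ) - r p : ℤ_[p]) + (r p - x p hp)‖ := by
        rw [sub_add_sub_cancel]
    _ ≤ max ‖((m % N : ℕ) - r p : ℤ_[p])‖ ‖(r p - x p hp : ℤ_[p])‖ := nonarchimedean _ _
    _ ≤ _ := max_le (norm_natCast_sub_le_of_modEq hmod)
        (by rw [norm_sub_rev, hr]; exact norm_sub_appr_le _ _)

end PadicInt

theorem simultaneous_skew_symmetric_approx {n : ℕ}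
    (P : Finset Nat.Primes) (d : ℕ) (hd : 0 < d)
    (ε : ℝ) (hε0 : 0 < ε) (hε1 : ε ≤ 1)
    (Up : (p : Nat.Primes) → p ∈ P → Matrix (Fin n) (Fin n) ℚ_[(p : ℕ)])
    (hskew : ∀ (p : Nat.Primes) (hp : p ∈ P), (Up p hp)ᵀ = -Up p hp)
    (hint : ∀ (p : Nat.Primes) (hp : p ∈ P) (i j : Fin n),
      ‖(d : ℚ_[(p : ℕ)]) * Up p hp i j‖ ≤ 1) :
    ∃ U : Matrix (Fin n) (Fin n) ℚ, Uᵀ = -U ∧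
      (∀ i j, ∃ m : ℤ, (d : ℚ) * U i j = (m : ℚ)) ∧
      (∀ i j, |(U i j : ℝ)| ≤
        (∏ p ∈ P, ((p : ℕ) : ℝ) ^ (⌈Real.logb (p : ℕ) (d / ε)⌉ + 1)) / d) ∧
      ∀ (p : Nat.Primes) (hp : p ∈ P),
        pMatNorm (U.map (fun x : ℚ => (x : ℚ_[(p : ℕ)])) - Up p hp) < ε := by
  set e : Nat.Primes → ℤ := fun p => ⌈Real.logb (p : ℕ) (d / ε)⌉ + 1
  have hk (p : Nat.Primes) : ((e p).toNat : ℤ) = e p := by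
    have := Int.ceil_nonneg <| Real.logb_nonneg (b := (p : ℕ)) (by exact_mod_cast p.2.one_lt) <|
      (one_le_div hε0).mpr (hε1.trans (Nat.one_le_cast.mpr hd))
    exact Int.toNat_of_nonneg (by simp only [e]; omega)
  choose M hMN hM using fun i j => PadicInt.exists_nat_lt_prod_forall_norm_sub_le P
    (fun p => (e p).toNat) (fun p hp => ⟨d * Up p hp i j, hint p hp i j⟩)
  have hC : ∏ p ∈ P, ((p : ℕ) : ℝ) ^ e p = ((∏ p ∈ P, (p : ℕ) ^ (e p).toNat : ℕ) : ℝ) := by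
    push_cast
    exact Finset.prod_congr rfl fun p _ => by rw [← zpow_natCast, hk]
  refine ⟨skewOfUpper (of fun i j => (M i j : ℚ) / d), transpose_skewOfUpper _,
    skewOfUpper_apply_mem (S := {x : ℚ | ∃ m : ℤ, d * x = m}) ⟨0, by simp⟩
      (fun x ⟨m, hm⟩ => ⟨-m, by push_cast; rw [mul_neg, hm]⟩)
      (fun i j => ⟨M i j, by rw [of_apply, mul_div_cancel₀ _ (Nat.cast_ne_zero.mpr hd.ne')]; simp⟩),
    skewOfUpper_apply_mem (S := {x : ℚ | |(x : ℝ)| ≤ _}) (by simp; positivity)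
      (fun x hx => by simpa using hx) (fun i j => ?_),
    fun p hp => pMatNorm_map_skewOfUpper_sub_lt (hskew p hp) hε0 fun i j => ?_⟩
  · rw [Set.mem_ofPred_eq, hC, of_apply, Rat.cast_div, abs_of_nonneg (by positivity)]
    push_cast
    gcongr
    exact_mod_cast (hMN i j).le
  · rw [of_apply]
    push_cast
    refine Padic.norm_div_natCast_sub_lt hd.ne' (hM i j p hp) ?_
    rw [hk]
    exact Real.mul_zpow_neg_ceil_logb_div_add_one_lt (by exact_mod_cast p.2.one_lt)
      (by exact_mod_cast hd) hε0
end
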